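/- For every generalized state divergence 𝔻 and every tripartite quantum channel N_{A'B'C'→ABC}, the generalized entropy exhibits strong subadditivity: 𝐒[A|BC]_N ≤ 𝐒[A|B]_{tr_C∘N}, where tr_C∘N_{A'B'C'→ABC} is the reduced channel from A'B'C' to AB, 𝐒[A|BC]_N := −inf_M 𝔻[N ‖ R_{A'→A}⊗M_{B'C'→BC}] with the infimum over all quantum channels M_{B'C'→BC}, and 𝐒[A|B]_{tr_C∘N} := −inf_P 𝔻[tr_C∘N ‖ R_{A'→A}⊗P_{B'C'→B}] with the infimum over all quantum channels P_{B'C'→B}. -/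

import Mathlib

/-!
For any channel `T` on the conditioning system, `R ⊗ (T ∘ M) = (id_A ⊗ T) ∘ (R ⊗ M)`, so data
processing along `id ⊗ (id_A ⊗ T)` (identity on the reference system) gives
`𝔻[(id_A ⊗ T) ∘ N ‖ R ⊗ (T ∘ M)] ≤ 𝔻[N ‖ R ⊗ M]`; since `T ∘ M` is again a channel it is a
competitor in the infimum defining the entropy of `(id_A ⊗ T) ∘ N`. Strong subadditivity is the
case `T = tr_C`. Complete positivity of `R ⊗ M` and of `tr_C` comes from Kraus representations
of `R` and of the partial trace.
-/

namespace QIT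

open Matrix
open scoped Kronecker ComplexOrder

noncomputable section

/-- Square matrices over `ℂ` indexed by `ι`, the operators on the Hilbert space `ℂ^ι`. -/
abbrev Mat (ι : Type) : Type := Matrix ι ι ℂ

/-- Linear maps between matrix spaces. -/
abbrev MatMap (ι κ : Type) : Type := Mat ι →ₗ[ℂ] Mat κ

/-- The tensor product `L₁ ⊗ L₂` of two linear maps on matrix spaces, defined entrywise
via matrix units. -/
def tensorMap {ι₁ κ₁ ι₂ κ₂ : Type} [Fintype ι₁] [DecidableEq ι₁] [Fintype ι₂] [DecidableEq ι₂]
    (L₁ : MatMap ι₁ κ₁) (L₂ : MatMap ι₂ κ₂) : MatMap (ι₁ × ι₂) (κ₁ × κ₂) where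
  toFun X := Matrix.of fun p q => ∑ k₁, ∑ l₁, ∑ k₂, ∑ l₂,
      X (k₁, k₂) (l₁, l₂) * L₁ (Matrix.single k₁ l₁ 1) p.1 q.1
        * L₂ (Matrix.single k₂ l₂ 1) p.2 q.2
  map_add' X Y := by
    ext p q
    simp [Matrix.add_apply, add_mul, Finset.sum_add_distrib]
  map_smul' c X := by
    ext p q
    simp [Matrix.smul_apply, smul_eq_mul, Finset.mul_sum, mul_assoc]

/-- A quantum state: positive semidefinite with unit trace. -/
def IsState {ι : Type} [Fintype ι] (ρ : Mat ι) : Prop :=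
  ρ.PosSemidef ∧ ρ.trace = 1

/-- Trace preserving linear map. -/
def TracePreserving {ι κ : Type} [Fintype ι] [Fintype κ] (L : MatMap ι κ) : Prop :=
  ∀ X, (L X).trace = X.trace

/-- Complete positivity: `id_R ⊗ L` preserves positive semidefiniteness for every
finite-dimensional reference system `R`. -/
def IsCP {ι κ : Type} [Fintype ι] [DecidableEq ι] [Fintype κ] (L : MatMap ι κ) : Prop :=
  ∀ (r : ℕ) (X : Mat (Fin r × ι)), X.PosSemidef →
    (tensorMap (LinearMap.id : MatMap (Fin r) (Fin r)) L X).PosSemidef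

/-- A quantum channel: completely positive and trace preserving. -/
def IsChannel {ι κ : Type} [Fintype ι] [DecidableEq ι] [Fintype κ] (L : MatMap ι κ) : Prop :=
  IsCP L ∧ TracePreserving L

/-- The completely mixing (depolarizing) map `X ↦ tr(X) · 1`. -/
def Rmap (ι κ : Type) [Fintype ι] [DecidableEq κ] : MatMap ι κ where
  toFun X := X.trace • (1 : Mat κ)
  map_add' X Y := by simp [Matrix.trace_add, add_smul]
  map_smul' c X := by simp [Matrix.trace_smul, SemigroupAction.mul_smul]

/-- Partial trace over the second tensor factor. -/
def ptraceRightMap (ι κ : Type) [Fintype κ] : MatMap (ι × κ) ι where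
  toFun X := Matrix.of fun p q => ∑ k, X (p, k) (q, k)
  map_add' X Y := by
    ext p q
    simp [Matrix.add_apply, Finset.sum_add_distrib]
  map_smul' c X := by
    ext p q
    simp [Matrix.smul_apply, smul_eq_mul, Finset.mul_sum]

/-- A generalized state divergence: a function of a pair (state, positive semidefinite
operator) on a common finite-dimensional system, satisfying the data-processing inequality
under all quantum channels. -/
structure StateDivergence : Type 1 where
  D : ∀ {ι : Type} [Fintype ι] [DecidableEq ι], Mat ι → Mat ι → EReal
  dpi : ∀ {ι κ : Type} [Fintype ι] [DecidableEq ι] [Fintype κ] [DecidableEq κ]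
      (L : MatMap ι κ), IsChannel L → ∀ ρ σ : Mat ι, IsState ρ → σ.PosSemidef →
      D (L ρ) (L σ) ≤ D ρ σ

/-- The generalized channel function `𝔻[N‖M]`: supremum over all finite-dimensional
reference systems `R = Fin r` and all input states of the state divergence of the outputs. -/
def chDiv (𝔻 : StateDivergence) {ι κ : Type} [Fintype ι] [DecidableEq ι]
    [Fintype κ] [DecidableEq κ] (N M : MatMap ι κ) : EReal :=
  ⨆ (r : ℕ) (ρ : {ρ : Mat (Fin r × ι) // IsState ρ}),
    𝔻.D (tensorMap (LinearMap.id : MatMap (Fin r) (Fin r)) N ρ.1)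
        (tensorMap (LinearMap.id : MatMap (Fin r) (Fin r)) M ρ.1)

/-- The generalized conditional entropy of a bipartite channel,
`𝐒[A|B]_N = −inf_M 𝔻[N ‖ R_{A'→A} ⊗ M_{B'→B}]`. -/
def condEnt (𝔻 : StateDivergence) {α' β' α β : Type}
    [Fintype α'] [DecidableEq α'] [Fintype β'] [DecidableEq β']
    [Fintype α] [DecidableEq α] [Fintype β] [DecidableEq β]
    (N : MatMap (α' × β') (α × β)) : EReal :=
  - ⨅ (M : {M : MatMap β' β // IsChannel M}),
      chDiv 𝔻 N (tensorMap (Rmap α' α) M.1)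

section TensorMap

variable {ι κ μ ι₁ κ₁ μ₁ ι₂ κ₂ μ₂ R S : Type}

theorem tensorMap_apply [Fintype ι₁] [DecidableEq ι₁] [Fintype ι₂] [DecidableEq ι₂]
    (L₁ : MatMap ι₁ κ₁) (L₂ : MatMap ι₂ κ₂) (X : Mat (ι₁ × ι₂)) (p q : κ₁ × κ₂) :
    tensorMap L₁ L₂ X p q = ∑ k₁, ∑ l₁, ∑ k₂, ∑ l₂,
      X (k₁, k₂) (l₁, l₂) * L₁ (single k₁ l₁ 1) p.1 q.1 * L₂ (single k₂ l₂ 1) p.2 q.2 :=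
  rfl

theorem map_eq_sum_single [Fintype ι] [DecidableEq ι] (L : MatMap ι κ) (A : Mat ι) :
    L A = ∑ i, ∑ j, A i j • L (single i j 1) := by
  conv_lhs => rw [matrix_eq_sum_single A]
  simp only [map_sum, ← map_smul, smul_single, smul_eq_mul, mul_one]

theorem linearMap_ext_kronecker [Fintype ι] [DecidableEq ι] [Fintype κ] [DecidableEq κ]
    {V : Type*} [AddCommMonoid V] [Module ℂ V] {f g : Mat (ι × κ) →ₗ[ℂ] V}
    (h : ∀ A B, f (A ⊗ₖ B) = g (A ⊗ₖ B)) : f = g := by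
  refine LinearMap.ext fun X => ?_
  induction X using Matrix.induction_on' with
  | h_zero => simp
  | h_add X Y hX hY => simp [hX, hY]
  | h_std_basis i j x =>
    rw [← mul_one x, ← single_kronecker_single]
    exact h _ _

theorem tensorMap_kronecker [Fintype ι₁] [DecidableEq ι₁] [Fintype ι₂] [DecidableEq ι₂]
    (L₁ : MatMap ι₁ κ₁) (L₂ : MatMap ι₂ κ₂) (A : Mat ι₁) (B : Mat ι₂) :
    tensorMap L₁ L₂ (A ⊗ₖ B) = L₁ A ⊗ₖ L₂ B := by
  ext p q
  rw [tensorMap_apply, kroneckerMap_apply, map_eq_sum_single L₁ A, map_eq_sum_single L₂ B]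
  simp only [Matrix.sum_apply, Matrix.smul_apply, smul_eq_mul, kroneckerMap_apply, Finset.sum_mul]
  simp only [Finset.mul_sum]
  refine Finset.sum_congr rfl fun _ _ => Finset.sum_congr rfl fun _ _ =>
    Finset.sum_congr rfl fun _ _ => Finset.sum_congr rfl fun _ _ => by ring

theorem tensorMap_comp [Fintype ι₁] [DecidableEq ι₁] [Fintype ι₂] [DecidableEq ι₂]
    [Fintype κ₁] [DecidableEq κ₁] [Fintype κ₂] [DecidableEq κ₂]
    (F₁ : MatMap κ₁ μ₁) (G₁ : MatMap ι₁ κ₁) (F₂ : MatMap κ₂ μ₂) (G₂ : MatMap ι₂ κ₂) :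
    tensorMap (F₁ ∘ₗ G₁) (F₂ ∘ₗ G₂) = tensorMap F₁ F₂ ∘ₗ tensorMap G₁ G₂ :=
  linearMap_ext_kronecker fun A B => by simp [tensorMap_kronecker]

theorem tensorMap_id_comp [Fintype R] [DecidableEq R] [Fintype ι] [DecidableEq ι]
    [Fintype κ] [DecidableEq κ] (F : MatMap κ μ) (G : MatMap ι κ) :
    tensorMap (LinearMap.id : MatMap R R) (F ∘ₗ G)
      = tensorMap LinearMap.id F ∘ₗ tensorMap LinearMap.id G := by
  simpa using tensorMap_comp (LinearMap.id : MatMap R R) LinearMap.id F G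

theorem tensorMap_id_apply [Fintype R] [DecidableEq R] [Fintype ι] [DecidableEq ι]
    (L : MatMap ι κ) (X : Mat (R × ι)) (p q : R × κ) :
    tensorMap (LinearMap.id : MatMap R R) L X p q
      = ∑ k, ∑ l, X (p.1, k) (q.1, l) * L (single k l 1) p.2 q.2 := by
  simp [tensorMap_apply, single_apply, ite_and]

theorem tensorMap_id_submatrix [Fintype R] [DecidableEq R] [Fintype S] [DecidableEq S]
    [Fintype ι] [DecidableEq ι] (L : MatMap ι κ) (f : S → R) (X : Mat (R × ι)) :
    tensorMap (LinearMap.id : MatMap S S) L (X.submatrix (Prod.map f id) (Prod.map f id))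
      = (tensorMap LinearMap.id L X).submatrix (Prod.map f id) (Prod.map f id) := by
  ext p q
  simp [tensorMap_id_apply]

theorem tensorMap_id_tensorMap_id [Fintype R] [DecidableEq R] [Fintype S] [DecidableEq S]
    [Fintype ι] [DecidableEq ι] (L : MatMap ι κ) (X : Mat (R × (S × ι))) :
    tensorMap (LinearMap.id : MatMap R R) (tensorMap (LinearMap.id : MatMap S S) L) X
      = (tensorMap (LinearMap.id : MatMap (R × S) (R × S)) L
          (X.submatrix (Equiv.prodAssoc R S ι) (Equiv.prodAssoc R S ι))).submatrix
        (Equiv.prodAssoc R S κ).symm (Equiv.prodAssoc R S κ).symm := by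
  ext p q
  simp [tensorMap_id_apply, Fintype.sum_prod_type, single_apply, ite_and]

end TensorMap

section Channels

variable {ι κ μ ι₁ κ₁ ι₂ κ₂ R S : Type}

theorem TracePreserving.tensorMap [Fintype ι₁] [DecidableEq ι₁] [Fintype ι₂] [DecidableEq ι₂]
    [Fintype κ₁] [Fintype κ₂] {L₁ : MatMap ι₁ κ₁} {L₂ : MatMap ι₂ κ₂}
    (h₁ : TracePreserving L₁) (h₂ : TracePreserving L₂) :
    TracePreserving (QIT.tensorMap L₁ L₂) := by
  have h : traceLinearMap (κ₁ × κ₂) ℂ ℂ ∘ₗ QIT.tensorMap L₁ L₂ = traceLinearMap (ι₁ × ι₂) ℂ ℂ :=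
    linearMap_ext_kronecker fun A B => by simp [tensorMap_kronecker, trace_kronecker, h₁ A, h₂ B]
  exact LinearMap.congr_fun h

theorem tracePreserving_id [Fintype ι] : TracePreserving (LinearMap.id : MatMap ι ι) :=
  fun _ => rfl

theorem IsCP.posSemidef_tensorMap_id [Fintype ι] [DecidableEq ι] [Fintype κ]
    [Fintype R] [DecidableEq R] {L : MatMap ι κ} (hL : IsCP L) {X : Mat (R × ι)}
    (hX : X.PosSemidef) : (tensorMap (LinearMap.id : MatMap R R) L X).PosSemidef := by
  let e := Fintype.equivFin R
  have h := hL _ _ (hX.submatrix (Prod.map e.symm id))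
  rw [tensorMap_id_submatrix] at h
  simpa [Matrix.submatrix_submatrix, Prod.map_comp_map] using h.submatrix (Prod.map e id)

theorem IsCP.tensorMap_id [Fintype ι] [DecidableEq ι] [Fintype κ] [Fintype S] [DecidableEq S]
    {L : MatMap ι κ} (hL : IsCP L) : IsCP (tensorMap (LinearMap.id : MatMap S S) L) := by
  intro r X hX
  rw [tensorMap_id_tensorMap_id]
  exact (hL.posSemidef_tensorMap_id (hX.submatrix _)).submatrix _

theorem IsCP.comp [Fintype ι] [DecidableEq ι] [Fintype κ] [DecidableEq κ] [Fintype μ]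
    {F : MatMap κ μ} {G : MatMap ι κ} (hF : IsCP F) (hG : IsCP G) : IsCP (F ∘ₗ G) := by
  intro r X hX
  rw [tensorMap_id_comp, LinearMap.comp_apply]
  exact hF r _ (hG r X hX)

theorem IsChannel.comp [Fintype ι] [DecidableEq ι] [Fintype κ] [DecidableEq κ] [Fintype μ]
    {F : MatMap κ μ} {G : MatMap ι κ} (hF : IsChannel F) (hG : IsChannel G) :
    IsChannel (F ∘ₗ G) :=
  ⟨hF.1.comp hG.1, fun X => by rw [LinearMap.comp_apply, hF.2, hG.2]⟩

theorem IsChannel.tensorMap_id [Fintype ι] [DecidableEq ι] [Fintype κ] [Fintype S]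
    [DecidableEq S] {L : MatMap ι κ} (hL : IsChannel L) :
    IsChannel (tensorMap (LinearMap.id : MatMap S S) L) :=
  ⟨hL.1.tensorMap_id, tracePreserving_id.tensorMap hL.2⟩

theorem IsChannel.isState_tensorMap_id [Fintype ι] [DecidableEq ι] [Fintype κ]
    [Fintype R] [DecidableEq R] {L : MatMap ι κ} (hL : IsChannel L) {ρ : Mat (R × ι)}
    (hρ : IsState ρ) : IsState (tensorMap (LinearMap.id : MatMap R R) L ρ) :=
  ⟨hL.1.posSemidef_tensorMap_id hρ.1, by rw [tracePreserving_id.tensorMap hL.2, hρ.2]⟩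

end Channels

section Kraus

variable {ι κ ι₁ κ₁ ι₂ κ₂ γ γ₁ γ₂ : Type}

def krausMap [Fintype ι] [Fintype γ] (K : γ → Matrix κ ι ℂ) : MatMap ι κ where
  toFun X := ∑ m, K m * X * (K m)ᴴ
  map_add' X Y := by simp [Matrix.mul_add, Matrix.add_mul, Finset.sum_add_distrib]
  map_smul' c X := by simp [Finset.smul_sum]

theorem krausMap_apply [Fintype ι] [Fintype γ] (K : γ → Matrix κ ι ℂ) (X : Mat ι) :
    krausMap K X = ∑ m, K m * X * (K m)ᴴ :=
  rfl

theorem posSemidef_krausMap [Fintype ι] [Fintype κ] [Fintype γ] (K : γ → Matrix κ ι ℂ)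
    {X : Mat ι} (hX : X.PosSemidef) : (krausMap K X).PosSemidef :=
  posSemidef_sum _ fun m _ => hX.mul_mul_conjTranspose_same (K m)

theorem kronecker_sum_sum {𝕜 α β : Type*} [NonUnitalNonAssocSemiring 𝕜] [Fintype α] [Fintype β]
    (A : α → Matrix ι₁ κ₁ 𝕜) (B : β → Matrix ι₂ κ₂ 𝕜) :
    (∑ a, A a) ⊗ₖ (∑ b, B b) = ∑ m : α × β, A m.1 ⊗ₖ B m.2 := by
  ext p q
  simp [Matrix.sum_apply, Fintype.sum_prod_type, Finset.sum_mul_sum]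

theorem tensorMap_krausMap [Fintype ι₁] [DecidableEq ι₁] [Fintype ι₂] [DecidableEq ι₂]
    [Fintype γ₁] [Fintype γ₂] (K₁ : γ₁ → Matrix κ₁ ι₁ ℂ) (K₂ : γ₂ → Matrix κ₂ ι₂ ℂ) :
    tensorMap (krausMap K₁) (krausMap K₂) = krausMap fun m : γ₁ × γ₂ => K₁ m.1 ⊗ₖ K₂ m.2 :=
  linearMap_ext_kronecker fun A B => by
    simp [tensorMap_kronecker, krausMap_apply, kronecker_sum_sum, mul_kronecker_mul,
      conjTranspose_kronecker]

theorem id_eq_krausMap [Fintype ι] [DecidableEq ι] :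
    (LinearMap.id : MatMap ι ι) = krausMap fun _ : Unit => 1 :=
  LinearMap.ext fun X => by simp [krausMap_apply]

theorem isCP_krausMap [Fintype ι] [DecidableEq ι] [Fintype κ] [Fintype γ] (K : γ → Matrix κ ι ℂ) :
    IsCP (krausMap K) := by
  intro r X hX
  rw [id_eq_krausMap, tensorMap_krausMap]
  exact posSemidef_krausMap _ hX

theorem IsCP.krausMap_tensorMap [Fintype ι₁] [DecidableEq ι₁] [Fintype ι₂] [DecidableEq ι₂]
    [Fintype κ₁] [Fintype κ₂] [DecidableEq κ₂] [Fintype γ] (K : γ → Matrix κ₁ ι₁ ℂ)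
    {M : MatMap ι₂ κ₂} (hM : IsCP M) : IsCP (tensorMap (krausMap K) M) := by
  have h : tensorMap (krausMap K) M
      = tensorMap (krausMap K) LinearMap.id ∘ₗ tensorMap LinearMap.id M := by
    simpa using tensorMap_comp (krausMap K) LinearMap.id LinearMap.id M
  rw [h, id_eq_krausMap (ι := κ₂), tensorMap_krausMap]
  exact (isCP_krausMap _).comp hM.tensorMap_id

theorem Rmap_eq_krausMap [Fintype ι] [DecidableEq ι] [Fintype κ] [DecidableEq κ] :
    Rmap ι κ = krausMap fun m : ι × κ => single m.2 m.1 (1 : ℂ) := by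
  ext X p q
  simp [krausMap_apply, Rmap, Matrix.sum_apply, Fintype.sum_prod_type, single_apply, one_apply,
    trace, ite_and]

theorem ptraceRightMap_eq_krausMap [Fintype ι] [DecidableEq ι] [Fintype κ] [DecidableEq κ] :
    ptraceRightMap ι κ
      = krausMap fun k : κ => Matrix.of fun (i : ι) (j : ι × κ) => if j = (i, k) then 1 else 0 := by
  ext X p q
  simp [krausMap_apply, ptraceRightMap, Matrix.sum_apply, mul_apply]

theorem isChannel_ptraceRightMap [Fintype ι] [DecidableEq ι] [Fintype κ] [DecidableEq κ] :
    IsChannel (ptraceRightMap ι κ) :=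
  ⟨ptraceRightMap_eq_krausMap (ι := ι) (κ := κ) ▸ isCP_krausMap _,
    fun X => by simp [trace, ptraceRightMap, Fintype.sum_prod_type]⟩

end Kraus

theorem chDiv_comp_le (𝔻 : StateDivergence) {ι κ μ : Type} [Fintype ι] [DecidableEq ι]
    [Fintype κ] [DecidableEq κ] [Fintype μ] [DecidableEq μ] {T : MatMap κ μ} {N M : MatMap ι κ}
    (hT : IsChannel T) (hN : IsChannel N) (hM : IsCP M) :
    chDiv 𝔻 (T ∘ₗ N) (T ∘ₗ M) ≤ chDiv 𝔻 N M := by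
  refine iSup₂_le fun r ρ => ?_
  rw [tensorMap_id_comp, tensorMap_id_comp, LinearMap.comp_apply, LinearMap.comp_apply]
  exact (𝔻.dpi _ hT.tensorMap_id _ _ (hN.isState_tensorMap_id ρ.2)
    (hM.posSemidef_tensorMap_id ρ.2.1)).trans (le_iSup₂_of_le r ρ le_rfl)

theorem condEnt_le_condEnt_comp (𝔻 : StateDivergence) {α' β' α β β₂ : Type}
    [Fintype α'] [DecidableEq α'] [Fintype β'] [DecidableEq β'] [Fintype α] [DecidableEq α]
    [Fintype β] [DecidableEq β] [Fintype β₂] [DecidableEq β₂]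
    {N : MatMap (α' × β') (α × β)} {T : MatMap β β₂} (hN : IsChannel N) (hT : IsChannel T) :
    condEnt 𝔻 N ≤ condEnt 𝔻 (tensorMap (LinearMap.id : MatMap α α) T ∘ₗ N) := by
  rw [condEnt, condEnt, EReal.neg_le_neg_iff]
  refine le_iInf fun M => iInf_le_of_le ⟨T ∘ₗ M.1, hT.comp M.2⟩ ?_
  have h : tensorMap (Rmap α' α) (T ∘ₗ M.1)
      = tensorMap LinearMap.id T ∘ₗ tensorMap (Rmap α' α) M.1 := by
    simpa using tensorMap_comp LinearMap.id (Rmap α' α) T M.1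
  rw [h]
  refine chDiv_comp_le 𝔻 hT.tensorMap_id hN ?_
  rw [Rmap_eq_krausMap]
  exact M.2.1.krausMap_tensorMap _

/-- strong subadditivity of the generalized entropy for tripartite channels,
`𝐒[A|BC]_N ≤ 𝐒[A|B]_{tr_C ∘ N}`. -/
theorem stmt7 (𝔻 : StateDivergence) (a' b' c' a b c : ℕ)
    (N : MatMap (Fin a' × (Fin b' × Fin c')) (Fin a × (Fin b × Fin c)))
    (hN : IsChannel N) :
    condEnt 𝔻 N
      ≤ condEnt 𝔻 ((tensorMap (LinearMap.id : MatMap (Fin a) (Fin a))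
          (ptraceRightMap (Fin b) (Fin c))) ∘ₗ N) :=
  condEnt_le_condEnt_comp 𝔻 hN isChannel_ptraceRightMap

end
end QIT
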